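/- Let H be a Hilbert space, L > 0, and f : H → H Lipschitz with constant L and f(0)=0. Let ϱ > L and u₀ ∈ H. Then there is a unique u ∈ H_{ϱ,0}(ℝ; H) satisfying u(t) = χ_{[0,∞)}(t) u₀ + ∫_{-∞}^t f(u(s)) ds for a.e. t ∈ ℝ. Moreover u vanishes a.e. on (-∞,0), u - χ_{[0,∞)}u₀ has a continuous representative, and the continuous representative of u on [0,∞) satisfies u(0+) = u₀. -/

import Mathlib

open MeasureTheory Real Set

/-- Squared weighted norm integrand total: `∫ ‖f t‖² e^{-2ϱt} dt`. -/
noncomputable def wInt (ϱ : ℝ) {H : Type*} [NormedAddCommGroup H] (f : ℝ → H) : ℝ :=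
  ∫ t : ℝ, ‖f t‖ ^ 2 * Real.exp (-2 * ϱ * t)

/-- Membership in the weighted space `H_{ϱ,0}(ℝ; H)`. -/
def memW (ϱ : ℝ) {H : Type*} [NormedAddCommGroup H] (f : ℝ → H) : Prop :=
  AEStronglyMeasurable f volume ∧
    Integrable (fun t : ℝ => ‖f t‖ ^ 2 * Real.exp (-2 * ϱ * t))

/-- The weighted norm `|f|_{ϱ,0}`. -/
noncomputable def wNorm (ϱ : ℝ) {H : Type*} [NormedAddCommGroup H] (f : ℝ → H) : ℝ :=
  Real.sqrt (wInt ϱ f)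

/-!
Pick `L < σ < ϱ`. In the unknown `v t = exp (-σ t) • u t`, the Picard map of `u' = f u`,
`u 0 = u₀` on `[0, ∞)` is a contraction of `ℝ →ᵇ H` with constant `L / σ` (Bielecki's weighted
sup norm), so its fixed point gives a continuous solution with `‖u t‖ ≤ C exp (σ t)`; extended
by `0` to `t < 0` it solves the integrated equation and lies in `H_{ϱ,0}` since `σ < ϱ`.
For uniqueness, the difference `d` of two solutions satisfies `‖d t‖ ≤ L ∫_{-∞}^t ‖d‖`, while
weighted square integrability gives `∫_{-∞}^t ‖d‖ ≤ M exp (ϱ t)`; each use of the inequality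
improves this bound by the factor `L / ϱ < 1`, so `d = 0` a.e.
-/

open Filter Topology NNReal BoundedContinuousFunction

section ExponentialIntegrals

lemma integrableOn_exp_mul_Iio {a : ℝ} (ha : 0 < a) (c : ℝ) :
    IntegrableOn (fun x : ℝ => exp (a * x)) (Iio c) :=
  (integrableOn_exp_mul_Iic ha c).mono_set Iio_subset_Iic_self

lemma integral_exp_mul_Iio {a : ℝ} (ha : 0 < a) (c : ℝ) :
    ∫ x in Iio c, exp (a * x) = exp (a * c) / a := by
  rw [setIntegral_congr_set Iio_ae_eq_Iic, integral_exp_mul_Iic ha]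

variable {E : Type*} [NormedAddCommGroup E] [NormedSpace ℝ E]

lemma exp_neg_mul_norm_integral_le {g : ℝ → E} {C σ m : ℝ} (hσ : 0 < σ) (hm : 0 ≤ m)
    (hg : ∀ s, ‖g s‖ ≤ C * exp (σ * s)) :
    exp (-(σ * m)) * ‖∫ s in 0..m, g s‖ ≤ C / σ := by
  have hmaj : IntegrableOn (fun s => C * exp (σ * s)) (Iic m) :=
    (integrableOn_exp_mul_Iic hσ m).const_mul C
  have hle : ‖∫ s in 0..m, g s‖ ≤ C * exp (σ * m) / σ :=
    calc ‖∫ s in 0..m, g s‖ ≤ ∫ s in 0..m, C * exp (σ * s) :=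
          intervalIntegral.norm_integral_le_of_norm_le hm (ae_of_all _ fun s _ => hg s)
            ((intervalIntegrable_iff_integrableOn_Ioc_of_le hm).2
              (hmaj.mono_set Ioc_subset_Iic_self))
      _ = ∫ s in Ioc 0 m, C * exp (σ * s) := intervalIntegral.integral_of_le hm
      _ ≤ ∫ s in Iic m, C * exp (σ * s) :=
          setIntegral_mono_set hmaj (ae_of_all _ fun s => (norm_nonneg _).trans (hg s))
            Ioc_subset_Iic_self.eventuallyLE
      _ = C * exp (σ * m) / σ := by rw [integral_const_mul, integral_exp_mul_Iic hσ, mul_div_assoc]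
  calc exp (-(σ * m)) * ‖∫ s in 0..m, g s‖ ≤ exp (-(σ * m)) * (C * exp (σ * m) / σ) := by
        gcongr
    _ = C / σ := by rw [exp_neg]; field_simp

end ExponentialIntegrals

section Picard

variable {E : Type*} [NormedAddCommGroup E] [NormedSpace ℝ E] {f : E → E} {K : ℝ≥0} {σ : ℝ}

/-- The Picard map of `u' = f u`, `u 0 = u₀` on `[0, ∞)`, in the unknown
`v t = exp (-σ t) • u t`. -/
noncomputable def picardStep (f : E → E) (σ : ℝ) (u₀ : E) (v : ℝ →ᵇ E) (t : ℝ) : E :=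
  exp (-(σ * max t 0)) • (u₀ + ∫ s in 0..max t 0, f (exp (σ * s) • v s))

lemma continuous_picardStep (hf : Continuous f) (u₀ : E) (v : ℝ →ᵇ E) :
    Continuous (picardStep f σ u₀ v) := by
  have hint : Continuous fun s => f (exp (σ * s) • v s) := hf.comp (by fun_prop)
  have hprim := intervalIntegral.continuous_primitive
    (μ := volume) (fun a b => hint.intervalIntegrable a b) 0
  unfold picardStep
  fun_prop

lemma norm_picardStep_sub_le (hf : LipschitzWith K f) (hσ : 0 < σ) (u₀ : E) (v w : ℝ →ᵇ E)
    (t : ℝ) : ‖picardStep f σ u₀ v t - picardStep f σ u₀ w t‖ ≤ K / σ * dist v w := by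
  have hint : ∀ v : ℝ →ᵇ E,
      IntervalIntegrable (fun s => f (exp (σ * s) • v s)) volume 0 (max t 0) :=
    fun v => (hf.continuous.comp (by fun_prop)).intervalIntegrable _ _
  have hpt : ∀ s,
      ‖f (exp (σ * s) • v s) - f (exp (σ * s) • w s)‖ ≤ K * dist v w * exp (σ * s) := fun s =>
    calc
      _ ≤ K * ‖exp (σ * s) • v s - exp (σ * s) • w s‖ := hf.norm_sub_le _ _
      _ = K * ‖v s - w s‖ * exp (σ * s) := by
          rw [← smul_sub, norm_smul, norm_of_nonneg (exp_nonneg _)]; ring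
      _ ≤ K * dist v w * exp (σ * s) := by
          gcongr; rw [← dist_eq_norm]; exact v.dist_coe_le_dist s
  rw [picardStep, picardStep, ← smul_sub, add_sub_add_left_eq_sub,
    ← intervalIntegral.integral_sub (hint v) (hint w), norm_smul, norm_of_nonneg (exp_nonneg _),
    div_mul_eq_mul_div]
  exact exp_neg_mul_norm_integral_le hσ (le_max_right t 0) hpt

lemma norm_picardStep_le (hf : LipschitzWith K f) (hf0 : f 0 = 0) (hσ : 0 < σ) (u₀ : E)
    (v : ℝ →ᵇ E) (t : ℝ) : ‖picardStep f σ u₀ v t‖ ≤ ‖u₀‖ + K / σ * ‖v‖ := by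
  have hzero : ‖picardStep f σ u₀ (0 : ℝ →ᵇ E) t‖ ≤ ‖u₀‖ := by
    simp only [picardStep, BoundedContinuousFunction.coe_zero, Pi.zero_apply, smul_zero, hf0,
      intervalIntegral.integral_zero, add_zero, norm_smul, norm_of_nonneg (exp_nonneg _)]
    exact mul_le_of_le_one_left (norm_nonneg _)
      (exp_le_one_iff.2 (neg_nonpos.2 (mul_nonneg hσ.le (le_max_right t 0))))
  calc ‖picardStep f σ u₀ v t‖
      ≤ ‖picardStep f σ u₀ 0 t‖ + ‖picardStep f σ u₀ v t - picardStep f σ u₀ 0 t‖ :=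
        norm_le_norm_add_norm_sub' _ _
    _ ≤ ‖u₀‖ + K / σ * ‖v‖ := by
        gcongr
        simpa only [dist_zero_right] using norm_picardStep_sub_le hf hσ u₀ v 0 t

lemma exists_eq_picardStep [CompleteSpace E] (hf : LipschitzWith K f) (hf0 : f 0 = 0)
    (hKσ : K < σ) (u₀ : E) : ∃ v : ℝ →ᵇ E, ∀ t, v t = picardStep f σ u₀ v t := by
  have hσ : 0 < σ := K.coe_nonneg.trans_lt hKσ
  let Φ : (ℝ →ᵇ E) → (ℝ →ᵇ E) := fun v =>
    .ofNormedAddCommGroup _ (continuous_picardStep hf.continuous u₀ v) _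
      (norm_picardStep_le hf hf0 hσ u₀ v)
  have hΦ : ContractingWith (K / σ.toNNReal) Φ := by
    have hcoe : ((K / σ.toNNReal : ℝ≥0) : ℝ) = K / σ := by
      rw [NNReal.coe_div, Real.coe_toNNReal _ hσ.le]
    refine ⟨?_, LipschitzWith.of_dist_le_mul fun v w => ?_⟩
    · rw [← NNReal.coe_lt_coe, hcoe, NNReal.coe_one]
      exact (div_lt_one hσ).2 hKσ
    · rw [hcoe, BoundedContinuousFunction.dist_le (by positivity)]
      intro t
      rw [dist_eq_norm]
      exact norm_picardStep_sub_le hf hσ u₀ v w t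
  exact ⟨_, fun t => DFunLike.congr_fun hΦ.fixedPoint_isFixedPt.symm t⟩

lemma exists_continuous_eq_add_integral [CompleteSpace E] (hf : LipschitzWith K f)
    (hf0 : f 0 = 0) (hKσ : K < σ) (u₀ : E) :
    ∃ g : ℝ → E, Continuous g ∧ (∃ C, ∀ t, ‖g t‖ ≤ C * exp (σ * t)) ∧
      ∀ t, 0 ≤ t → g t = u₀ + ∫ s in 0..t, f (g s) := by
  obtain ⟨v, hv⟩ := exists_eq_picardStep hf hf0 hKσ u₀
  refine ⟨fun t => exp (σ * t) • v t, by fun_prop, ⟨‖v‖, fun t => ?_⟩, fun t ht => ?_⟩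
  · rw [norm_smul, norm_of_nonneg (exp_nonneg _), mul_comm]
    gcongr
    exact v.norm_coe_le_norm t
  · dsimp only
    rw [hv t, picardStep, max_eq_left ht, smul_smul, ← exp_add, add_neg_cancel, exp_zero,
      one_smul]

end Picard

section WeightedSpace

/-- AM–GM for `p * x` and `p⁻¹` with `p = exp (ϱ t / 2 - ϱ s)`: this weight makes both terms
integrate over `Iio t` to multiples of `exp (ϱ t)`. -/
lemma le_weighted_amgm (ϱ t s x : ℝ) :
    x ≤ (exp (ϱ * t) * (x ^ 2 * exp (-2 * ϱ * s)) + exp (-(ϱ * t)) * exp (2 * ϱ * s)) / 2 := by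
  set p := exp (ϱ * t / 2 - ϱ * s)
  have hp : 0 < p := exp_pos _
  have h1 : exp (ϱ * t) * exp (-2 * ϱ * s) = p ^ 2 := by
    rw [sq, ← exp_add, ← exp_add]; ring_nf
  have h2 : exp (-(ϱ * t)) * exp (2 * ϱ * s) = p⁻¹ ^ 2 := by
    rw [← exp_neg, sq, ← exp_add, ← exp_add]; ring_nf
  have h3 : (p * x - p⁻¹) ^ 2 = p ^ 2 * x ^ 2 - 2 * x + p⁻¹ ^ 2 := by
    field_simp; ring
  rw [← mul_assoc, mul_right_comm, h1, h2]
  linarith [sq_nonneg (p * x - p⁻¹)]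

variable {E : Type*} [NormedAddCommGroup E] {ϱ : ℝ}

lemma memW.sub {u v : ℝ → E} (hu : memW ϱ u) (hv : memW ϱ v) : memW ϱ (u - v) := by
  refine ⟨hu.1.sub hv.1, ((hu.2.const_mul 2).add (hv.2.const_mul 2)).mono' ?_ ?_⟩
  · exact ((hu.1.sub hv.1).norm.pow 2).mul (by fun_prop)
  · refine ae_of_all _ fun t => ?_
    simp only [Pi.add_apply, Pi.sub_apply]
    have hsq : ‖u t - v t‖ ^ 2 ≤ 2 * ‖u t‖ ^ 2 + 2 * ‖v t‖ ^ 2 := by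
      nlinarith [norm_sub_le (u t) (v t), sq_nonneg (‖u t‖ - ‖v t‖), norm_nonneg (u t - v t)]
    rw [norm_of_nonneg (by positivity)]
    nlinarith [exp_pos (-2 * ϱ * t)]

lemma memW_indicator_Ici {g : ℝ → E} {C σ : ℝ} (hg : Continuous g)
    (hC : ∀ t, ‖g t‖ ≤ C * exp (σ * t)) (hσϱ : σ < ϱ) : memW ϱ ((Ici 0).indicator g) := by
  have hmeas : AEStronglyMeasurable ((Ici 0).indicator g) :=
    hg.aestronglyMeasurable.indicator measurableSet_Ici
  have hmaj : IntegrableOn (fun t => C ^ 2 * exp (-(2 * (ϱ - σ)) * t)) (Ici 0) :=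
    ((integrableOn_exp_mul_Ioi (by linarith) (-1)).mono_set
      (Ici_subset_Ioi.2 neg_one_lt_zero)).const_mul _
  refine ⟨hmeas, ((integrable_indicator_iff measurableSet_Ici).2 hmaj).mono'
    ((hmeas.norm.pow 2).mul (by fun_prop)) (ae_of_all _ fun t => ?_)⟩
  rw [norm_of_nonneg (by positivity)]
  by_cases ht : t ∈ Ici 0
  · have hexp : exp (-(2 * (ϱ - σ)) * t) = exp (σ * t) ^ 2 * exp (-2 * ϱ * t) := by
      rw [sq, ← exp_add, ← exp_add]; ring_nf
    rw [indicator_of_mem ht, indicator_of_mem ht, hexp, ← mul_assoc, ← mul_pow]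
    gcongr
    exact hC t
  · simp [indicator_of_notMem ht]

lemma integrableOn_weighted_amgm (hϱ : 0 < ϱ) {u : ℝ → E} (hu : memW ϱ u) (t : ℝ) :
    IntegrableOn (fun s => (exp (ϱ * t) * (‖u s‖ ^ 2 * exp (-2 * ϱ * s))
      + exp (-(ϱ * t)) * exp (2 * ϱ * s)) / 2) (Iio t) :=
  ((hu.2.integrableOn.const_mul _).add
    ((integrableOn_exp_mul_Iio (by linarith) t).const_mul _)).div_const 2

lemma integrableOn_Iio_of_memW (hϱ : 0 < ϱ) {u : ℝ → E} (hu : memW ϱ u) (t : ℝ) :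
    IntegrableOn u (Iio t) :=
  (integrableOn_weighted_amgm hϱ hu t).mono' hu.1.restrict
    (ae_of_all _ fun s => le_weighted_amgm ϱ t s _)

lemma integral_norm_Iio_le_of_memW (hϱ : 0 < ϱ) {u : ℝ → E} (hu : memW ϱ u) (t : ℝ) :
    ∫ s in Iio t, ‖u s‖ ≤ (wInt ϱ u / 2 + 1 / (4 * ϱ)) * exp (ϱ * t) := by
  have hwInt : ∫ s in Iio t, ‖u s‖ ^ 2 * exp (-2 * ϱ * s) ≤ wInt ϱ u :=
    setIntegral_le_integral hu.2 (ae_of_all _ fun s => by positivity)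
  have hexp : exp (-(ϱ * t)) * exp (2 * ϱ * t) = exp (ϱ * t) := by
    rw [← exp_add]; ring_nf
  calc ∫ s in Iio t, ‖u s‖
      ≤ ∫ s in Iio t, (exp (ϱ * t) * (‖u s‖ ^ 2 * exp (-2 * ϱ * s))
          + exp (-(ϱ * t)) * exp (2 * ϱ * s)) / 2 :=
        integral_mono (integrableOn_Iio_of_memW hϱ hu t).norm (integrableOn_weighted_amgm hϱ hu t)
          fun s => le_weighted_amgm ϱ t s _
    _ = (exp (ϱ * t) * (∫ s in Iio t, ‖u s‖ ^ 2 * exp (-2 * ϱ * s))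
          + exp (-(ϱ * t)) * (exp (2 * ϱ * t) / (2 * ϱ))) / 2 := by
        rw [integral_div, integral_add (hu.2.integrableOn.const_mul _)
          ((integrableOn_exp_mul_Iio (by linarith) t).const_mul _), integral_const_mul,
          integral_const_mul, integral_exp_mul_Iio (by linarith)]
    _ ≤ (wInt ϱ u / 2 + 1 / (4 * ϱ)) * exp (ϱ * t) := by
        rw [mul_div_assoc', hexp]
        calc _ ≤ (exp (ϱ * t) * wInt ϱ u + exp (ϱ * t) / (2 * ϱ)) / 2 := by gcongr
          _ = _ := by field_simp; ring

end WeightedSpace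

lemma ae_eq_zero_of_le_mul_integral_Iio {d : ℝ → ℝ} {L ϱ M : ℝ} (hL : 0 ≤ L) (hLϱ : L < ϱ)
    (hd : 0 ≤ d) (hint : ∀ t, IntegrableOn d (Iio t))
    (hM : ∀ t, ∫ s in Iio t, d s ≤ M * exp (ϱ * t))
    (hle : ∀ᵐ t, d t ≤ L * ∫ s in Iio t, d s) : d =ᵐ[volume] 0 := by
  have hϱ : 0 < ϱ := hL.trans_lt hLϱ
  have hiter : ∀ n : ℕ, ∀ t, ∫ s in Iio t, d s ≤ (L / ϱ) ^ n * (M * exp (ϱ * t)) := by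
    intro n
    induction n with
    | zero => simpa using hM
    | succ n ih =>
      intro t
      calc ∫ s in Iio t, d s ≤ ∫ s in Iio t, L * ((L / ϱ) ^ n * M) * exp (ϱ * s) := by
            refine setIntegral_mono_ae_restrict (hint t)
              ((integrableOn_exp_mul_Iio hϱ t).const_mul _) (ae_restrict_of_ae ?_)
            filter_upwards [hle] with s hs
            calc d s ≤ L * ∫ r in Iio s, d r := hs
              _ ≤ L * ((L / ϱ) ^ n * (M * exp (ϱ * s))) := by gcongr; exact ih s
              _ = L * ((L / ϱ) ^ n * M) * exp (ϱ * s) := by ring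
        _ = (L / ϱ) ^ (n + 1) * (M * exp (ϱ * t)) := by
            rw [integral_const_mul, integral_exp_mul_Iio hϱ]; ring
  have hvanish : ∀ t, ∫ s in Iio t, d s = 0 := by
    intro t
    have htend : Tendsto (fun n : ℕ => (L / ϱ) ^ n * (M * exp (ϱ * t))) atTop (𝓝 0) := by
      simpa using (tendsto_pow_atTop_nhds_zero_of_lt_one (div_nonneg hL hϱ.le)
        ((div_lt_one hϱ).2 hLϱ)).mul_const (M * exp (ϱ * t))
    exact le_antisymm (ge_of_tendsto' htend fun n => hiter n t)
      (setIntegral_nonneg measurableSet_Iio fun s _ => hd s)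
  have hzero : ∀ n : ℕ, ∀ᵐ s, s ∈ Iio (n : ℝ) → d s = 0 := fun n =>
    (ae_restrict_iff' measurableSet_Iio).1
      ((setIntegral_eq_zero_iff_of_nonneg_ae (ae_of_all _ hd) (hint n)).1 (hvanish n))
  filter_upwards [ae_all_iff.2 hzero] with s hs
  obtain ⟨n, hn⟩ := exists_nat_gt s
  exact hs n hn

section IntegralEquation

variable {E : Type*} [NormedAddCommGroup E] [NormedSpace ℝ E] {f : E → E}

lemma setIntegral_Iio_comp_indicator_Ici (hf0 : f 0 = 0) (g : ℝ → E) (t : ℝ) :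
    ∫ s in Iio t, f ((Ici 0).indicator g s) = ∫ s in 0..max t 0, f (g s) := by
  rw [show (fun s => f ((Ici 0).indicator g s)) = (Ici 0).indicator (f ∘ g) from
      (indicator_comp_of_zero hf0).symm,
    setIntegral_indicator measurableSet_Ici, Iio_inter_Ici, integral_Ico_eq_integral_Ioc]
  rcases le_total 0 t with ht | ht
  · rw [max_eq_left ht, intervalIntegral.integral_of_le ht]
    rfl
  · rw [max_eq_right ht, intervalIntegral.integral_same, Ioc_eq_empty (not_lt.2 ht),
      Measure.restrict_empty, integral_zero_measure]

lemma indicator_Ici_eq_add_integral_Iio (hf0 : f 0 = 0) {g : ℝ → E} {u₀ : E}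
    (hg : ∀ t, 0 ≤ t → g t = u₀ + ∫ s in 0..t, f (g s)) (t : ℝ) :
    (Ici 0).indicator g t =
      (Ici 0).indicator (fun _ => u₀) t + ∫ s in Iio t, f ((Ici 0).indicator g s) := by
  rw [setIntegral_Iio_comp_indicator_Ici hf0]
  rcases le_or_gt 0 t with ht | ht
  · rw [indicator_of_mem (mem_Ici.2 ht), indicator_of_mem (mem_Ici.2 ht), max_eq_left ht, hg t ht]
  · rw [indicator_of_notMem (notMem_Ici.2 ht), indicator_of_notMem (notMem_Ici.2 ht),
      max_eq_right ht.le, intervalIntegral.integral_same, add_zero]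

lemma ae_eq_of_memW_of_eq_add_integral {K : ℝ≥0} {ϱ : ℝ} (hf : LipschitzWith K f)
    (hf0 : f 0 = 0) (hKϱ : K < ϱ) {a u v : ℝ → E} (hu : memW ϱ u) (hv : memW ϱ v)
    (hu_eq : ∀ᵐ t, u t = a t + ∫ s in Iio t, f (u s))
    (hv_eq : ∀ᵐ t, v t = a t + ∫ s in Iio t, f (v s)) : u =ᵐ[volume] v := by
  have hϱ : 0 < ϱ := K.coe_nonneg.trans_lt hKϱ
  have hfint : ∀ w, memW ϱ w → ∀ t, IntegrableOn (fun s => f (w s)) (Iio t) :=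
    fun w hw t => ((integrableOn_Iio_of_memW hϱ hw t).norm.const_mul K).mono'
      (hf.continuous.comp_aestronglyMeasurable hw.1).restrict
      (ae_of_all _ fun s => by simpa [hf0] using hf.norm_sub_le (w s) 0)
  have huv := hu.sub hv
  have hzero : (fun t => ‖(u - v) t‖) =ᵐ[volume] 0 := by
    refine ae_eq_zero_of_le_mul_integral_Iio K.coe_nonneg hKϱ (fun _ => norm_nonneg _)
      (fun t => (integrableOn_Iio_of_memW hϱ huv t).norm)
      (integral_norm_Iio_le_of_memW hϱ huv) ?_
    filter_upwards [hu_eq, hv_eq] with t hut hvt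
    calc ‖(u - v) t‖ = ‖∫ s in Iio t, (f (u s) - f (v s))‖ := by
          rw [Pi.sub_apply, hut, hvt, add_sub_add_left_eq_sub,
            integral_sub (hfint u hu t) (hfint v hv t)]
      _ ≤ ∫ s in Iio t, ‖f (u s) - f (v s)‖ := norm_integral_le_integral_norm _
      _ ≤ ∫ s in Iio t, K * ‖(u - v) s‖ :=
          integral_mono ((hfint u hu t).sub (hfint v hv t)).norm
            ((integrableOn_Iio_of_memW hϱ huv t).norm.const_mul K)
            fun s => hf.norm_sub_le (u s) (v s)
      _ = K * ∫ s in Iio t, ‖(u - v) s‖ := integral_const_mul _ _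
  filter_upwards [hzero] with t ht
  simpa [sub_eq_zero] using ht

end IntegralEquation

/-- Initial value problem in integrated form with Dirac source at 0. -/
theorem stmt14 {H : Type*} [NormedAddCommGroup H] [InnerProductSpace ℂ H] [CompleteSpace H]
    (L : ℝ) (hL : 0 < L) (f : H → H)
    (hlip : ∀ x y : H, ‖f x - f y‖ ≤ L * ‖x - y‖) (hf0 : f 0 = 0)
    (ϱ : ℝ) (hϱ : L < ϱ) (u₀ : H) :
    ∃ u : ℝ → H, memW ϱ u ∧
      (∀ᵐ t : ℝ ∂volume,
        u t = Set.indicator (Set.Ici (0 : ℝ)) (fun _ => u₀) t + ∫ s in Set.Iio t, f (u s)) ∧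
      (∀ᵐ t : ℝ ∂volume, t < 0 → u t = 0) ∧
      (∃ w : ℝ → H, Continuous w ∧
        (∀ᵐ t : ℝ ∂volume, w t = u t - Set.indicator (Set.Ici (0 : ℝ)) (fun _ => u₀) t) ∧
        w 0 = 0) ∧
      (∀ u' : ℝ → H, memW ϱ u' →
        (∀ᵐ t : ℝ ∂volume,
          u' t = Set.indicator (Set.Ici (0 : ℝ)) (fun _ => u₀) t + ∫ s in Set.Iio t, f (u' s)) →
        u' =ᵐ[volume] u) := by
  have hK : (L.toNNReal : ℝ) = L := Real.coe_toNNReal L hL.le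
  have hf : LipschitzWith L.toNNReal f :=
    LipschitzWith.of_dist_le_mul fun x y => by simpa only [dist_eq_norm, hK] using hlip x y
  obtain ⟨g, hg, ⟨C, hC⟩, hsol⟩ :=
    exists_continuous_eq_add_integral hf hf0 (σ := (L + ϱ) / 2) (by rw [hK]; linarith) u₀
  have hu : memW ϱ ((Ici 0).indicator g) := memW_indicator_Ici hg hC (by linarith)
  have heq := indicator_Ici_eq_add_integral_Iio hf0 hsol
  refine ⟨(Ici 0).indicator g, hu, ae_of_all _ heq,
    ae_of_all _ fun t ht => indicator_of_notMem (notMem_Ici.2 ht) g,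
    ⟨fun t => ∫ s in 0..max t 0, f (g s), ?_, ae_of_all _ fun t => ?_, by simp⟩,
    fun u' hu' heq' => ae_eq_of_memW_of_eq_add_integral hf hf0 (by rw [hK]; exact hϱ) hu' hu
      heq' (ae_of_all _ heq)⟩
  · exact (intervalIntegral.continuous_primitive (μ := volume)
      (fun a b => (hf.continuous.comp hg).intervalIntegrable a b) 0).comp
      (continuous_id.max continuous_const)
  · rw [heq t, setIntegral_Iio_comp_indicator_Ici hf0, add_sub_cancel_left]
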